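/- arXiv:2305.05234 — 4 statements merged into one kernel-verified Lean document; each statement's English description precedes it below -/
import Mathlib

section
/- Let T>0, θ>1, A,B>0, and let u:[0,T]→[0,∞) be continuous with u(t) ≤ A + B·u(t)^θ for all t∈[0,T]. If A < (1 - 1/θ)·(θB)^{-1/(θ-1)} and u(0) ≤ (θB)^{-1/(θ-1)}, then u(t) ≤ (θ/(θ-1))·A for all t∈[0,T]. -/
open Set

theorem bootstrap_lemma (T θ A B : ℝ) (hT : 0 < T) (hθ : 1 < θ) (hA : 0 < A) (hB : 0 < B)
    (u : ℝ → ℝ) (hu_cont : ContinuousOn u (Icc 0 T))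
    (hu_nonneg : ∀ t ∈ Icc 0 T, 0 ≤ u t)
    (hu_bound : ∀ t ∈ Icc 0 T, u t ≤ A + B * u t ^ θ)
    (hA_small : A < (1 - 1 / θ) * (θ * B) ^ (-(1 / (θ - 1))))
    (hu0 : u 0 ≤ (θ * B) ^ (-(1 / (θ - 1)))) :
    ∀ t ∈ Icc 0 T, u t ≤ (θ / (θ - 1)) * A := by
  set X : ℝ := (θ * B) ^ (-(1 / (θ - 1))) with hXdef
  have hθ0 : (0:ℝ) < θ := lt_trans one_pos hθ
  have hθ1 : (0:ℝ) < θ - 1 := by linarith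
  have hθB : (0:ℝ) < θ * B := mul_pos hθ0 hB
  have hX : 0 < X := Real.rpow_pos_of_pos hθB _
  have hXpow : X ^ (θ - 1) = (θ * B)⁻¹ := by
    rw [hXdef, ← Real.rpow_mul hθB.le]
    have h : -(1 / (θ - 1)) * (θ - 1) = -1 := by field_simp
    rw [h, Real.rpow_neg_one]
  -- key algebraic claim
  have key : ∀ x : ℝ, 0 ≤ x → x ≤ X → x ≤ A + B * x ^ θ → x ≤ (θ / (θ - 1)) * A := by
    intro x hx0 hxX hxb
    have hpow : B * x ^ θ ≤ x / θ := by
      have hxθ : x ^ θ = x ^ (θ - 1) * x := by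
        rcases eq_or_lt_of_le hx0 with h | h
        · rw [← h, Real.zero_rpow (ne_of_gt hθ0), Real.zero_rpow (ne_of_gt hθ1), mul_zero]
        · rw [← Real.rpow_add_one (ne_of_gt h), sub_add_cancel]
      have hmon : x ^ (θ - 1) ≤ X ^ (θ - 1) :=
        Real.rpow_le_rpow hx0 hxX hθ1.le
      calc B * x ^ θ = B * (x ^ (θ - 1) * x) := by rw [hxθ]
        _ ≤ B * ((θ * B)⁻¹ * x) := by
            rw [← hXpow]
            apply mul_le_mul_of_nonneg_left (mul_le_mul_of_nonneg_right hmon hx0) hB.le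
        _ = x / θ := by field_simp
    have h1 : (θ - 1) * x ≤ θ * A := by
      have := hxb.trans (by linarith : A + B * x ^ θ ≤ A + x / θ)
      have h2 : θ * x ≤ θ * A + x := by
        have := mul_le_mul_of_nonneg_left this hθ0.le
        rw [mul_add, mul_div_cancel₀ _ (ne_of_gt hθ0)] at this
        linarith
      linarith
    rw [div_mul_eq_mul_div, le_div_iff₀ hθ1]
    linarith [h1]
  have hcX : (θ / (θ - 1)) * A < X := by
    have h1 : (θ / (θ - 1)) * A < (θ / (θ - 1)) * ((1 - 1 / θ) * X) := by
      apply mul_lt_mul_of_pos_left hA_small (div_pos hθ0 hθ1)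
    have h2 : (θ / (θ - 1)) * ((1 - 1 / θ) * X) = X := by
      field_simp
    linarith
  intro t ht
  by_contra hcon
  push_neg at hcon
  have hutX : X < u t := by
    by_contra h
    push_neg at h
    exact absurd (key (u t) (hu_nonneg t ht) h (hu_bound t ht)) (not_le.mpr hcon)
  have hsub : Icc 0 t ⊆ Icc 0 T := Icc_subset_Icc le_rfl ht.2
  have hIVT := intermediate_value_Icc ht.1 (hu_cont.mono hsub)
  have hXmem : X ∈ Icc (u 0) (u t) := ⟨hu0, hutX.le⟩
  obtain ⟨s, hs, hus⟩ := hIVT hXmem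
  have hsT : s ∈ Icc 0 T := hsub hs
  have := key (u s) (hu_nonneg s hsT) (le_of_eq hus) (hu_bound s hsT)
  rw [hus] at this
  linarith
end

section
/- Let ν be a σ-finite Borel measure on B = {z ∈ ℝ^m : 0 < |z| ≤ 1} with ∫_B |z|² ν(dz) < ∞, T>0, N>0, and let g: [0,T]×B → [0,∞) be measurable with ∫₀^T ∫_B ℓ(g(s,z)) ν(dz) ds ≤ N, where ℓ(x)=x log x − x + 1. Then ∫₀^T ∫_B |z| |g(s,z) − 1| ν(dz) ds < ∞, and in fact sup over all such g of this integral is finite. -/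
/-!
The entropy cost `ℓ = klFun` dominates the squared Hellinger integrand `(√b - 1)²`, and for
`0 ≤ σ ≤ 1` one has `σ |b - 1| ≤ σ² + 4 (√b - 1)²`. Hence `|z| |g - 1| ≤ |z|² + 4 ℓ(g)` on the
unit ball, and integrating bounds the quantity by `T ∫ |z|² dν + 4 N`, independently of `g`.
-/

open MeasureTheory Set InformationTheory

lemma klFun_eq_mul_log_sub_add_one (x : ℝ) : klFun x = x * Real.log x - x + 1 := by
  rw [klFun_apply]; ring

lemma sq_sub_one_le_klFun_sq {t : ℝ} (ht : 0 ≤ t) : (t - 1) ^ 2 ≤ klFun (t ^ 2) := by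
  rcases ht.eq_or_lt with rfl | ht
  · simp [klFun_zero]
  · have hlog : 1 - t⁻¹ ≤ Real.log t := Real.one_sub_inv_le_log_of_pos ht
    have hmul : t ^ 2 * (1 - t⁻¹) = t ^ 2 - t := by field_simp
    rw [klFun_apply, Real.log_pow]
    push_cast
    nlinarith [mul_le_mul_of_nonneg_left hlog (sq_nonneg t)]

lemma mul_abs_sq_sub_one_le {σ t : ℝ} (hσ₀ : 0 ≤ σ) (hσ₁ : σ ≤ 1) (ht : 0 ≤ t) :
    σ * |t ^ 2 - 1| ≤ σ ^ 2 + 4 * (t - 1) ^ 2 := by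
  rcases le_or_gt t 3 with ht3 | ht3
  · have hfac : |t ^ 2 - 1| ≤ 4 * |t - 1| := by
      rw [show t ^ 2 - 1 = (t - 1) * (t + 1) by ring, abs_mul,
        abs_of_nonneg (by linarith : 0 ≤ t + 1)]
      nlinarith [abs_nonneg (t - 1)]
    -- AM-GM: `4 σ |t - 1| ≤ σ² + 4 (t - 1)²`
    nlinarith [sq_nonneg (σ - 2 * |t - 1|), sq_abs (t - 1), mul_le_mul_of_nonneg_left hfac hσ₀]
  · -- `σ (t² - 1) ≤ (t - 1) (t + 1) ≤ 2 (t - 1)²` as `t ≥ 3`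
    rw [abs_of_nonneg (by nlinarith)]
    nlinarith

lemma mul_abs_sub_one_le_sq_add_klFun {σ b : ℝ} (hσ₀ : 0 ≤ σ) (hσ₁ : σ ≤ 1) (hb : 0 ≤ b) :
    σ * |b - 1| ≤ σ ^ 2 + 4 * klFun b := by
  have h := mul_abs_sq_sub_one_le hσ₀ hσ₁ (Real.sqrt_nonneg b)
  have hkl := sq_sub_one_le_klFun_sq (Real.sqrt_nonneg b)
  rw [Real.sq_sqrt hb] at h hkl
  linarith

section Integrals

variable {α E : Type*} [MeasurableSpace α] [NormedAddCommGroup E] [MeasurableSpace E]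
  [OpensMeasurableSpace E] {ν : Measure E}

lemma lintegral_norm_mul_abs_sub_one_le (hν : ∀ᵐ z ∂ν, ‖z‖ ≤ 1) {h : E → ℝ} (hh : ∀ z, 0 ≤ h z) :
    ∫⁻ z, ENNReal.ofReal (‖z‖ * |h z - 1|) ∂ν ≤
      ∫⁻ z, ENNReal.ofReal (‖z‖ ^ 2) ∂ν + 4 * ∫⁻ z, ENNReal.ofReal (klFun (h z)) ∂ν := by
  calc ∫⁻ z, ENNReal.ofReal (‖z‖ * |h z - 1|) ∂ν
      ≤ ∫⁻ z, (ENNReal.ofReal (‖z‖ ^ 2) + 4 * ENNReal.ofReal (klFun (h z))) ∂ν := by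
        refine lintegral_mono_ae (hν.mono fun z hz => ?_)
        rw [← ENNReal.ofReal_ofNat 4, ← ENNReal.ofReal_mul (by norm_num),
          ← ENNReal.ofReal_add (by positivity) (by positivity [klFun_nonneg (hh z)])]
        exact ENNReal.ofReal_le_ofReal
          (mul_abs_sub_one_le_sq_add_klFun (norm_nonneg z) hz (hh z))
    _ = _ := by
        rw [lintegral_add_left (by fun_prop), lintegral_const_mul' _ _ (by norm_num)]

lemma lintegral_lintegral_norm_mul_abs_sub_one_le (μ : Measure α) (hν : ∀ᵐ z ∂ν, ‖z‖ ≤ 1)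
    {g : α → E → ℝ} (hg : ∀ s z, 0 ≤ g s z) :
    ∫⁻ s, ∫⁻ z, ENNReal.ofReal (‖z‖ * |g s z - 1|) ∂ν ∂μ ≤
      μ univ * ∫⁻ z, ENNReal.ofReal (‖z‖ ^ 2) ∂ν +
        4 * ∫⁻ s, ∫⁻ z, ENNReal.ofReal (klFun (g s z)) ∂ν ∂μ := by
  calc ∫⁻ s, ∫⁻ z, ENNReal.ofReal (‖z‖ * |g s z - 1|) ∂ν ∂μ
      ≤ ∫⁻ s, (∫⁻ z, ENNReal.ofReal (‖z‖ ^ 2) ∂ν +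
          4 * ∫⁻ z, ENNReal.ofReal (klFun (g s z)) ∂ν) ∂μ :=
        lintegral_mono fun s => lintegral_norm_mul_abs_sub_one_le hν (hg s)
    _ = _ := by
        rw [lintegral_add_left measurable_const, lintegral_const, mul_comm,
          lintegral_const_mul' _ _ (by norm_num)]

end Integrals

theorem cost_bounded_controls_uniform_integrability_general
    (m : ℕ) (ν : Measure (EuclideanSpace ℝ (Fin m)))
    (hsupp : ν {z | ¬(0 < ‖z‖ ∧ ‖z‖ ≤ 1)} = 0)
    (hmom : ∫⁻ z, ENNReal.ofReal (‖z‖ ^ 2) ∂ν < ⊤)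
    (T N : ℝ) :
    ∃ M : ℝ, ∀ g : ℝ → EuclideanSpace ℝ (Fin m) → ℝ,
      Measurable (fun p : ℝ × EuclideanSpace ℝ (Fin m) => g p.1 p.2) →
      (∀ s z, 0 ≤ g s z) →
      (∫⁻ s in Ioc (0 : ℝ) T, ∫⁻ z,
          ENNReal.ofReal (g s z * Real.log (g s z) - g s z + 1) ∂ν
        ≤ ENNReal.ofReal N) →
      ∫⁻ s in Ioc (0 : ℝ) T, ∫⁻ z,
          ENNReal.ofReal (‖z‖ * |g s z - 1|) ∂ν
        ≤ ENNReal.ofReal M := by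
  set K := ENNReal.ofReal T * ∫⁻ z, ENNReal.ofReal (‖z‖ ^ 2) ∂ν + 4 * ENNReal.ofReal N
  have hK : K ≠ ⊤ := by finiteness
  refine ⟨K.toReal, fun g _ hg hcost => ?_⟩
  simp only [← klFun_eq_mul_log_sub_add_one] at hcost
  have hν : ∀ᵐ z ∂ν, ‖z‖ ≤ 1 := (ae_iff.mpr hsupp).mono fun _ hz => hz.2
  calc _ ≤ _ := lintegral_lintegral_norm_mul_abs_sub_one_le _ hν hg
    _ ≤ K := by
        rw [Measure.restrict_apply_univ, Real.volume_Ioc, sub_zero]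
        exact add_le_add_right (mul_le_mul_right hcost _) _
    _ = _ := (ENNReal.ofReal_toReal hK).symm

/-- For a σ-finite Lévy measure `ν` on `B = {0 < |z| ≤ 1} ⊆ ℝ^m` with `∫|z|² dν < ∞`, the
integral `∫₀^T ∫_B |z||g−1| dν ds` is finite, uniformly over all controls `g ≥ 0` of
relative-entropy cost `∫₀^T ∫_B ℓ(g) dν ds ≤ N`, where `ℓ(x) = x log x − x + 1`. -/
theorem cost_bounded_controls_uniform_integrability
    (m : ℕ) (hm : 1 ≤ m) (ν : Measure (EuclideanSpace ℝ (Fin m))) [SigmaFinite ν]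
    (hsupp : ν {z | ¬(0 < ‖z‖ ∧ ‖z‖ ≤ 1)} = 0)
    (hmom : ∫⁻ z, ENNReal.ofReal (‖z‖ ^ 2) ∂ν < ⊤)
    (T N : ℝ) (hT : 0 < T) (hN : 0 < N) :
    ∃ M : ℝ, ∀ g : ℝ → EuclideanSpace ℝ (Fin m) → ℝ,
      Measurable (fun p : ℝ × EuclideanSpace ℝ (Fin m) => g p.1 p.2) →
      (∀ s z, 0 ≤ g s z) →
      (∫⁻ s in Ioc (0 : ℝ) T, ∫⁻ z,
          ENNReal.ofReal (g s z * Real.log (g s z) - g s z + 1) ∂ν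
        ≤ ENNReal.ofReal N) →
      ∫⁻ s in Ioc (0 : ℝ) T, ∫⁻ z,
          ENNReal.ofReal (‖z‖ * |g s z - 1|) ∂ν
        ≤ ENNReal.ofReal M :=
  cost_bounded_controls_uniform_integrability_general m ν hsupp hmom T N
end

section
/- Let ν be a finite Borel measure on a measurable space Z, T>0, N>0. For measurable g:[0,T]×Z→[0,∞) with ∫₀^T∫_Z ℓ(g)dν dt ≤ N (ℓ(x)=x log x − x +1), the normalized measure ν̃_g(A) = (1/m_g)∫_A g dν dt, where m_g = ∫₀^T∫_Z g dν dt ≠ 0, has relative entropy with respect to the normalized measure θ = (ν_T)/(ν_T([0,T]×Z)) bounded by N/m_g + 1 − ν_T([0,T]×Z)/m_g + log(ν_T([0,T]×Z)/m_g), where ν_T = Leb_{[0,T]} ⊗ ν. -/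
open MeasureTheory Set

/-- Relative entropy bound for tilted control measures: if `g ≥ 0` has cost
`∫₀^T∫_Z ℓ(g) dν dt ≤ N` and `m_g = ∫₀^T∫_Z g dν dt ≠ 0`, then the relative entropy of the
normalized measure `ν̃_g = m_g^{-1} g · (Leb⊗ν)` with respect to the normalized measure
`θ = ν_T / ν_T([0,T]×Z)` is at most `N/m_g + 1 − ν_T([0,T]×Z)/m_g + log(ν_T([0,T]×Z)/m_g)`. -/
theorem relative_entropy_bound_of_cost_bound
    {Z : Type*} [MeasurableSpace Z] (ν : Measure Z) [IsFiniteMeasure ν]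
    (T N : ℝ) (hT : 0 < T) (hN : 0 < N)
    (g : ℝ → Z → ℝ)
    (hmeas : Measurable (fun p : ℝ × Z => g p.1 p.2))
    (hnonneg : ∀ t z, 0 ≤ g t z)
    (μT : Measure (ℝ × Z)) (hμT : μT = (volume.restrict (Ioc (0 : ℝ) T)).prod ν)
    (νTtot : ℝ) (hνTtot : νTtot = T * (ν univ).toReal)
    (hcost : ∫⁻ p, ENNReal.ofReal
        (g p.1 p.2 * Real.log (g p.1 p.2) - g p.1 p.2 + 1) ∂μT ≤ ENNReal.ofReal N)
    (mg : ℝ) (hmg : mg = ∫ p, g p.1 p.2 ∂μT) (hmg0 : mg ≠ 0)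
    (hint_g : Integrable (fun p : ℝ × Z => g p.1 p.2) μT)
    (hint_ent : Integrable
      (fun p : ℝ × Z => Real.log ((νTtot / mg) * g p.1 p.2) * g p.1 p.2) μT) :
    (1 / mg) * ∫ p, Real.log ((νTtot / mg) * g p.1 p.2) * g p.1 p.2 ∂μT
      ≤ N / mg + 1 - νTtot / mg + Real.log (νTtot / mg) := by
  have hν0 : ν ≠ 0 := by
    rintro rfl
    exact hmg0 (by rw [hmg, hμT, Measure.prod_zero, integral_zero_measure])
  have hνuniv : 0 < (ν univ).toReal := by
    refine ENNReal.toReal_pos ?_ (measure_ne_top _ _)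
    simpa [Measure.measure_univ_eq_zero] using hν0
  have hνT : 0 < νTtot := by rw [hνTtot]; positivity
  haveI hfin : IsFiniteMeasure μT := by
    rw [hμT]
    haveI : IsFiniteMeasure (volume.restrict (Ioc (0 : ℝ) T)) :=
      ⟨by rw [Measure.restrict_apply_univ, Real.volume_Ioc]; exact ENNReal.ofReal_lt_top⟩
    infer_instance
  have hmgpos : 0 < mg :=
    lt_of_le_of_ne (hmg ▸ integral_nonneg fun p => hnonneg _ _) (Ne.symm hmg0)
  set c := νTtot / mg with hc
  have hcpos : 0 < c := div_pos hνT hmgpos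
  have htot : (μT univ).toReal = νTtot := by
    rw [hμT, hνTtot]
    rw [show ((volume.restrict (Ioc (0:ℝ) T)).prod ν) univ = ENNReal.ofReal T * ν univ by
      rw [← univ_prod_univ, Measure.prod_prod, Measure.restrict_apply_univ, Real.volume_Ioc,
        sub_zero]]
    rw [ENNReal.toReal_mul, ENNReal.toReal_ofReal hT.le]
  have hpt : ∀ p : ℝ × Z, Real.log (c * g p.1 p.2) * g p.1 p.2
      = (g p.1 p.2 * Real.log (g p.1 p.2) - g p.1 p.2 + 1) + g p.1 p.2 - 1
        + Real.log c * g p.1 p.2 := by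
    intro p
    rcases eq_or_lt_of_le (hnonneg p.1 p.2) with h | h
    · simp [← h]
    · rw [Real.log_mul hcpos.ne' h.ne']; ring
  have hint_l : Integrable
      (fun p : ℝ × Z => g p.1 p.2 * Real.log (g p.1 p.2) - g p.1 p.2 + 1) μT := by
    have heq : (fun p : ℝ × Z => g p.1 p.2 * Real.log (g p.1 p.2) - g p.1 p.2 + 1)
        = fun p : ℝ × Z => Real.log (c * g p.1 p.2) * g p.1 p.2
            - Real.log c * g p.1 p.2 - g p.1 p.2 + 1 := by
      funext p; have := hpt p; linarith
    rw [heq]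
    exact ((hint_ent.sub (hint_g.const_mul _)).sub hint_g).add (integrable_const 1)
  have hl_nonneg : ∀ p : ℝ × Z,
      0 ≤ g p.1 p.2 * Real.log (g p.1 p.2) - g p.1 p.2 + 1 := by
    intro p
    rcases eq_or_lt_of_le (hnonneg p.1 p.2) with h | h
    · simp [← h]
    · have h1 := Real.log_le_sub_one_of_pos (inv_pos.2 h)
      rw [Real.log_inv] at h1
      have h2 : g p.1 p.2 * (g p.1 p.2)⁻¹ = 1 := mul_inv_cancel₀ h.ne'
      nlinarith
  have hlint : ∫ p, (g p.1 p.2 * Real.log (g p.1 p.2) - g p.1 p.2 + 1) ∂μT ≤ N := by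
    have heq := MeasureTheory.ofReal_integral_eq_lintegral_ofReal hint_l
      (Filter.Eventually.of_forall hl_nonneg)
    refine (ENNReal.ofReal_le_ofReal_iff hN.le).1 ?_
    rw [heq]; exact hcost
  have hsplit : ∫ p, Real.log (c * g p.1 p.2) * g p.1 p.2 ∂μT
      = (∫ p, (g p.1 p.2 * Real.log (g p.1 p.2) - g p.1 p.2 + 1) ∂μT)
        + mg - νTtot + Real.log c * mg := by
    have i2 : Integrable (fun p : ℝ × Z => Real.log c * g p.1 p.2) μT := hint_g.const_mul _
    have i3 : Integrable (fun p : ℝ × Z =>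
        g p.1 p.2 * Real.log (g p.1 p.2) - g p.1 p.2 + 1 + g p.1 p.2) μT := hint_l.add hint_g
    have i1 : Integrable (fun p : ℝ × Z =>
        g p.1 p.2 * Real.log (g p.1 p.2) - g p.1 p.2 + 1 + g p.1 p.2 - 1) μT :=
      i3.sub (integrable_const 1)
    simp only [hpt]
    rw [integral_add i1 i2, integral_sub i3 (integrable_const 1),
      integral_add hint_l hint_g, integral_const, integral_const_mul, smul_eq_mul, mul_one,
      measureReal_def, htot, ← hmg]
  rw [hsplit]
  have hstep : (1 / mg) * ((∫ p, (g p.1 p.2 * Real.log (g p.1 p.2) - g p.1 p.2 + 1) ∂μT)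
        + mg - νTtot + Real.log c * mg)
      ≤ (1 / mg) * (N + mg - νTtot + Real.log c * mg) := by
    apply mul_le_mul_of_nonneg_left (by linarith) (by positivity)
  refine hstep.trans (le_of_eq ?_)
  rw [hc]
  field_simp
end

section
/- Let ν be a σ-finite Borel measure on B = {z ∈ ℝ^m : 0 < |z| ≤ 1} with ∫_B |z|² ν(dz) < ∞, T, N > 0. Then lim_{δ→0} sup_g ∫₀^T ∫_{0<|z|<δ} |z| |g(s,z) − 1| ν(dz) ds = 0, where the supremum is over measurable g: [0,T]×B → [0,∞) with ∫₀^T∫_B ℓ(g(s,z)) ν(dz) ds ≤ N and ℓ(x) = x log x − x + 1. -/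
open MeasureTheory Set

private lemma ell_lb (x : ℝ) (hx : 0 ≤ x) :
    (Real.sqrt x - 1) ^ 2 ≤ x * Real.log x - x + 1 := by
  rcases eq_or_lt_of_le hx with h | h
  · simp [← h]
  · set s := Real.sqrt x with hs
    have hs0 : 0 < s := Real.sqrt_pos.2 h
    have hsx : s ^ 2 = x := Real.sq_sqrt hx
    have hlog : 1 - s⁻¹ ≤ Real.log s := by
      have := Real.log_le_sub_one_of_pos (inv_pos.2 hs0)
      rw [Real.log_inv] at this
      linarith
    have hx2 : Real.log x = 2 * Real.log s := by
      rw [← hsx, Real.log_pow]; push_cast; ring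
    have h2 : 2 * s ^ 2 * (1 - s⁻¹) ≤ 2 * s ^ 2 * Real.log s :=
      mul_le_mul_of_nonneg_left hlog (by positivity)
    have hinv : s * s⁻¹ = 1 := mul_inv_cancel₀ hs0.ne'
    have hxl : x * Real.log x = 2 * s ^ 2 * Real.log s := by
      rw [hx2, ← hsx]; ring
    nlinarith [h2, hinv, hxl, hsx, sq_nonneg (s - 1)]

private lemma ell_nonneg (x : ℝ) (hx : 0 ≤ x) : 0 ≤ x * Real.log x - x + 1 :=
  le_trans (sq_nonneg _) (ell_lb x hx)

private lemma pointwise_bound (M δ r g : ℝ) (hM : 0 < M) (hδ : 0 ≤ δ)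
    (hrδ : r ≤ δ) (hg : 0 ≤ g) :
    r * |g - 1| ≤ M / 2 * r ^ 2 + (3 / M + 6 * δ) * (g * Real.log g - g + 1) := by
  set L := g * Real.log g - g + 1 with hL
  have hs0 : 0 ≤ Real.sqrt g := Real.sqrt_nonneg g
  have hsq : Real.sqrt g ^ 2 = g := Real.sq_sqrt hg
  have hLs : (Real.sqrt g - 1) ^ 2 ≤ L := ell_lb g hg
  have hL0 : 0 ≤ L := ell_nonneg g hg
  have hMinv : 0 < M⁻¹ := inv_pos.2 hM
  have h3M : 3 / M = 3 * M⁻¹ := by ring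
  have hδL : 0 ≤ δ * L := mul_nonneg hδ hL0
  rcases le_or_gt g 2 with h2 | h2
  · have hq : (g - 1) ^ 2 ≤ 6 * L := by
      nlinarith [hLs, hsq, hs0, sq_nonneg (Real.sqrt g - 1), sq_nonneg (Real.sqrt g + 1)]
    have key : r * |g - 1| ≤ M / 2 * r ^ 2 + (g - 1) ^ 2 * M⁻¹ / 2 := by
      nlinarith [sq_nonneg (M * r - |g - 1|), sq_abs (g - 1), mul_pos hM hM,
        mul_inv_cancel₀ hM.ne', hMinv,
        mul_le_mul_of_nonneg_right (sq_nonneg (M * r - |g - 1|)) hMinv.le]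
    have hqm : (g - 1) ^ 2 * M⁻¹ ≤ 6 * L * M⁻¹ :=
      mul_le_mul_of_nonneg_right hq hMinv.le
    rw [h3M]
    nlinarith [key, hqm, hδL]
  · have habs : |g - 1| = g - 1 := abs_of_pos (by linarith)
    have h6L : g - 1 ≤ 6 * L := by
      nlinarith [hLs, hsq, hs0, sq_nonneg (5 * Real.sqrt g - 7), sq_nonneg (Real.sqrt g - 1)]
    have h1 : r * |g - 1| ≤ δ * (g - 1) := by
      rw [habs]
      exact mul_le_mul_of_nonneg_right hrδ (by linarith)
    have h2' : δ * (g - 1) ≤ δ * (6 * L) := mul_le_mul_of_nonneg_left h6L hδ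
    have hr2 : 0 ≤ M / 2 * r ^ 2 := by positivity
    have h3L : 0 ≤ 3 / M * L := by positivity
    nlinarith [h1, h2', hr2, h3L]

/-- Uniform smallness near the origin of the jump space: for controls `g ≥ 0` of
relative-entropy cost at most `N`, `∫₀^T ∫_{0<|z|<δ} |z||g−1| dν ds → 0` as `δ → 0`,
uniformly over all such `g`. -/
theorem cost_bounded_controls_uniform_smallness
    (m : ℕ) (hm : 1 ≤ m) (ν : Measure (EuclideanSpace ℝ (Fin m))) [SigmaFinite ν]
    (hsupp : ν {z | ¬(0 < ‖z‖ ∧ ‖z‖ ≤ 1)} = 0)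
    (hmom : ∫⁻ z, ENNReal.ofReal (‖z‖ ^ 2) ∂ν < ⊤)
    (T N : ℝ) (hT : 0 < T) (hN : 0 < N) :
    ∀ ε : ℝ, 0 < ε → ∃ δ : ℝ, 0 < δ ∧
      ∀ g : ℝ → EuclideanSpace ℝ (Fin m) → ℝ,
        Measurable (fun p : ℝ × EuclideanSpace ℝ (Fin m) => g p.1 p.2) →
        (∀ s z, 0 ≤ g s z) →
        (∫⁻ s in Ioc (0 : ℝ) T, ∫⁻ z,
            ENNReal.ofReal (g s z * Real.log (g s z) - g s z + 1) ∂ν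
          ≤ ENNReal.ofReal N) →
        ∫⁻ s in Ioc (0 : ℝ) T, ∫⁻ z in {z | 0 < ‖z‖ ∧ ‖z‖ < δ},
            ENNReal.ofReal (‖z‖ * |g s z - 1|) ∂ν
          ≤ ENNReal.ofReal ε := by
  intro ε hε
  set M : ℝ := 9 * N / ε with hMdef
  have hM : 0 < M := by positivity
  have hfmeas : Measurable fun z : EuclideanSpace ℝ (Fin m) => ENNReal.ofReal (‖z‖ ^ 2) :=
    (measurable_norm.pow_const 2).ennreal_ofReal
  set μ : Measure (EuclideanSpace ℝ (Fin m)) :=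
    ν.withDensity (fun z => ENNReal.ofReal (‖z‖ ^ 2)) with hμdef
  have hAm : ∀ δ : ℝ, MeasurableSet {z : EuclideanSpace ℝ (Fin m) | 0 < ‖z‖ ∧ ‖z‖ < δ} := by
    intro δ
    have : {z : EuclideanSpace ℝ (Fin m) | 0 < ‖z‖ ∧ ‖z‖ < δ}
        = (fun z : EuclideanSpace ℝ (Fin m) => ‖z‖) ⁻¹' (Ioo 0 δ) := rfl
    rw [this]
    exact measurable_norm measurableSet_Ioo
  have hμuniv : μ univ ≠ ⊤ := by
    rw [hμdef, withDensity_apply _ MeasurableSet.univ, Measure.restrict_univ]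
    exact hmom.ne
  set η : ENNReal := ENNReal.ofReal (ε / (3 * (T * (M / 2)))) with hηdef
  have hηpos : 0 < η := ENNReal.ofReal_pos.2 (by positivity)
  -- find δ₁ > 0 with small second moment near 0
  obtain ⟨n, hn⟩ : ∃ n : ℕ,
      μ {z : EuclideanSpace ℝ (Fin m) | 0 < ‖z‖ ∧ ‖z‖ < 1 / (n + 1 : ℝ)} < η := by
    have hanti : Antitone (fun n : ℕ =>
        {z : EuclideanSpace ℝ (Fin m) | 0 < ‖z‖ ∧ ‖z‖ < 1 / (n + 1 : ℝ)}) := by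
      intro a b hab z hz
      refine ⟨hz.1, lt_of_lt_of_le hz.2 ?_⟩
      apply one_div_le_one_div_of_le (by positivity)
      have : (a : ℝ) ≤ b := Nat.cast_le.2 hab
      linarith
    have hiInter : ⋂ n : ℕ,
        {z : EuclideanSpace ℝ (Fin m) | 0 < ‖z‖ ∧ ‖z‖ < 1 / (n + 1 : ℝ)} = ∅ := by
      ext z
      simp only [mem_iInter, mem_setOf_eq, mem_empty_iff_false, iff_false]
      intro h
      obtain ⟨k, hk⟩ := exists_nat_one_div_lt (h 0).1
      exact absurd (h k).2 (not_lt.2 hk.le)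
    have htt := tendsto_measure_iInter_atTop (μ := μ)
      (fun k => (hAm _).nullMeasurableSet) hanti
      ⟨0, ne_top_of_le_ne_top hμuniv (measure_mono (subset_univ _))⟩
    rw [hiInter, measure_empty] at htt
    exact (htt.eventually (gt_mem_nhds hηpos)).exists
  have hδ₁pos : (0 : ℝ) < 1 / (n + 1 : ℝ) := by positivity
  set δ : ℝ := min (1 / (n + 1 : ℝ)) (ε / (18 * N)) with hδdef
  have hδ0 : 0 < δ := lt_min hδ₁pos (by positivity)
  refine ⟨δ, hδ0, ?_⟩
  intro g hgmeas hg0 hcost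
  set A : Set (EuclideanSpace ℝ (Fin m)) := {z | 0 < ‖z‖ ∧ ‖z‖ < δ} with hAdef
  have hμA : μ A < η := by
    refine lt_of_le_of_lt (measure_mono ?_) hn
    intro z hz
    exact ⟨hz.1, lt_of_lt_of_le hz.2 (min_le_left _ _)⟩
  have hIδ : ∫⁻ z in A, ENNReal.ofReal (‖z‖ ^ 2) ∂ν ≤ η := by
    rw [← withDensity_apply _ (hAm δ)]
    exact hμA.le
  set c₀ : ℝ := 3 / M + 6 * δ with hc₀def
  have hc₀ : 0 ≤ c₀ := by positivity
  -- inner integral bound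
  have step1 : ∀ s : ℝ, ∫⁻ z in A, ENNReal.ofReal (‖z‖ * |g s z - 1|) ∂ν
      ≤ ENNReal.ofReal (M / 2) * ∫⁻ z in A, ENNReal.ofReal (‖z‖ ^ 2) ∂ν
        + ENNReal.ofReal c₀
          * ∫⁻ z in A, ENNReal.ofReal (g s z * Real.log (g s z) - g s z + 1) ∂ν := by
    intro s
    have hb : ∀ z ∈ A, ENNReal.ofReal (‖z‖ * |g s z - 1|)
        ≤ ENNReal.ofReal (M / 2 * ‖z‖ ^ 2)
          + ENNReal.ofReal c₀
            * ENNReal.ofReal (g s z * Real.log (g s z) - g s z + 1) := by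
      intro z hz
      have hL0 := ell_nonneg (g s z) (hg0 s z)
      have hpt := pointwise_bound M δ ‖z‖ (g s z) hM hδ0.le hz.2.le (hg0 s z)
      calc ENNReal.ofReal (‖z‖ * |g s z - 1|)
          ≤ ENNReal.ofReal (M / 2 * ‖z‖ ^ 2
              + c₀ * (g s z * Real.log (g s z) - g s z + 1)) :=
            ENNReal.ofReal_le_ofReal hpt
        _ = _ := by
            rw [ENNReal.ofReal_add (by positivity) (mul_nonneg hc₀ hL0),
              ENNReal.ofReal_mul hc₀]
    calc ∫⁻ z in A, ENNReal.ofReal (‖z‖ * |g s z - 1|) ∂ν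
        ≤ ∫⁻ z in A, (ENNReal.ofReal (M / 2 * ‖z‖ ^ 2)
            + ENNReal.ofReal c₀
              * ENNReal.ofReal (g s z * Real.log (g s z) - g s z + 1)) ∂ν :=
          setLIntegral_mono' (hAm δ) hb
      _ = (∫⁻ z in A, ENNReal.ofReal (M / 2 * ‖z‖ ^ 2) ∂ν)
            + ∫⁻ z in A, ENNReal.ofReal c₀
              * ENNReal.ofReal (g s z * Real.log (g s z) - g s z + 1) ∂ν :=
          lintegral_add_left ((measurable_norm.pow_const 2).const_mul (M / 2)).ennreal_ofReal _
      _ = ENNReal.ofReal (M / 2) * (∫⁻ z in A, ENNReal.ofReal (‖z‖ ^ 2) ∂ν)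
            + ENNReal.ofReal c₀
              * ∫⁻ z in A, ENNReal.ofReal (g s z * Real.log (g s z) - g s z + 1) ∂ν := by
          rw [lintegral_const_mul' _ _ ENNReal.ofReal_ne_top]
          congr 1
          have heq : ∀ z : EuclideanSpace ℝ (Fin m), ENNReal.ofReal (M / 2 * ‖z‖ ^ 2)
              = ENNReal.ofReal (M / 2) * ENNReal.ofReal (‖z‖ ^ 2) := fun z =>
            ENNReal.ofReal_mul (by positivity)
          simp_rw [heq]
          rw [lintegral_const_mul' _ _ ENNReal.ofReal_ne_top]
  -- outer integral
  have hH : ∫⁻ s in Ioc (0 : ℝ) T,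
      (∫⁻ z in A, ENNReal.ofReal (g s z * Real.log (g s z) - g s z + 1) ∂ν)
      ≤ ENNReal.ofReal N :=
    le_trans (lintegral_mono fun s => setLIntegral_le_lintegral A _) hcost
  calc ∫⁻ s in Ioc (0 : ℝ) T, ∫⁻ z in A, ENNReal.ofReal (‖z‖ * |g s z - 1|) ∂ν
      ≤ ∫⁻ s in Ioc (0 : ℝ) T,
          (ENNReal.ofReal (M / 2) * (∫⁻ z in A, ENNReal.ofReal (‖z‖ ^ 2) ∂ν)
            + ENNReal.ofReal c₀
              * ∫⁻ z in A, ENNReal.ofReal (g s z * Real.log (g s z) - g s z + 1) ∂ν) :=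
        lintegral_mono step1
    _ = ENNReal.ofReal (M / 2) * (∫⁻ z in A, ENNReal.ofReal (‖z‖ ^ 2) ∂ν)
          * volume (Ioc (0 : ℝ) T)
        + ENNReal.ofReal c₀ * ∫⁻ s in Ioc (0 : ℝ) T,
            (∫⁻ z in A, ENNReal.ofReal (g s z * Real.log (g s z) - g s z + 1) ∂ν) := by
        rw [lintegral_add_left measurable_const, setLIntegral_const,
          lintegral_const_mul' _ _ ENNReal.ofReal_ne_top]
    _ ≤ ENNReal.ofReal (M / 2) * η * ENNReal.ofReal T
        + ENNReal.ofReal c₀ * ENNReal.ofReal N := by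
        rw [Real.volume_Ioc, sub_zero]
        exact add_le_add (mul_le_mul' (mul_le_mul' le_rfl hIδ) le_rfl)
          (mul_le_mul' le_rfl hH)
    _ ≤ ENNReal.ofReal ε := by
        rw [← ENNReal.ofReal_mul (by positivity), ← ENNReal.ofReal_mul (by positivity),
          ← ENNReal.ofReal_mul hc₀, ← ENNReal.ofReal_add (by positivity)
            (mul_nonneg hc₀ hN.le)]
        apply ENNReal.ofReal_le_ofReal
        have hδle : δ ≤ ε / (18 * N) := min_le_right _ _
        have h1 : M / 2 * (ε / (3 * (T * (M / 2)))) * T = ε / 3 := by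
          field_simp
        have h2 : 3 / M * N = ε / 3 := by
          rw [hMdef]; field_simp; ring
        have h3 : 6 * δ * N ≤ ε / 3 := by
          have : 6 * δ * N ≤ 6 * (ε / (18 * N)) * N := by
            apply mul_le_mul_of_nonneg_right _ hN.le
            linarith
          calc 6 * δ * N ≤ 6 * (ε / (18 * N)) * N := this
            _ = ε / 3 := by field_simp; ring
        have hc₀N : c₀ * N ≤ 2 / 3 * ε := by
          have : c₀ * N = 3 / M * N + 6 * δ * N := by rw [hc₀def]; ring
          rw [this, h2]
          linarith
        rw [h1]
        linarith
end
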